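/- If λ = ω, then the countable topological space (X,τ) is metrizable. -/

import Mathlib

universe u v

open Ordinal Set Topology Cardinal

namespace LawsonExample

def Xset (lam : Cardinal.{u}) : Set (Ordinal.{u} → Fin 3) :=
  {x | (∀ γ : Ordinal.{u}, lam.ord ≤ γ → x γ = 2) ∧ {γ : Ordinal.{u} | x γ ≠ 2}.Finite}

noncomputable def nrm (x : Ordinal.{u} → Fin 3) : Ordinal.{u} :=
  sInf {α | ∀ γ, α ≤ γ → x γ = 2}

noncomputable def Vnbhd (lam : Cardinal.{u}) (x : ↥(Xset lam)) (α : Ordinal.{u}) :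
    Set ↥(Xset lam) :=
  if x.1 0 = 2 then {x}
  else if x.1 0 = 1 then
    {y | (∀ γ, 1 ≤ γ → γ < α → y.1 γ = x.1 γ) ∧
         (∀ γ, α ≤ γ → γ < lam.ord → y.1 γ ≠ 1) ∧
         (y.1 0 = 1 ∨ (y.1 0 = 2 ∧ α < nrm y.1))}
  else
    {y | (∀ γ, 1 ≤ γ → γ < α → y.1 γ = x.1 γ) ∧
         (y.1 0 = 0 ∨ (y.1 0 = 2 ∧ α < nrm y.1 ∧ y.1 (Ordinal.pred (nrm y.1)) = 1))}

def tauSet (lam : Cardinal.{u}) : Set (Set ↥(Xset lam)) :=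
  {U | ∀ x ∈ U, ∃ α : Ordinal.{u}, nrm x.1 ≤ α ∧ α < lam.ord ∧ Vnbhd lam x α ⊆ U}

lemma nrm_spec {lam : Cardinal.{u}} (x : ↥(Xset lam)) {γ : Ordinal.{u}}
    (h : nrm x.1 ≤ γ) : x.1 γ = 2 := by
  have hne : {α : Ordinal.{u} | ∀ γ, α ≤ γ → x.1 γ = 2}.Nonempty :=
    ⟨lam.ord, fun γ hγ => x.2.1 γ hγ⟩
  exact csInf_mem hne γ h

lemma nrm_lt {lam : Cardinal.{u}} (hlam : ℵ₀ ≤ lam) (x : ↥(Xset lam)) :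
    nrm x.1 < lam.ord := by
  have hlim : Order.IsSuccLimit lam.ord := Cardinal.isSuccLimit_ord hlam
  rcases eq_empty_or_nonempty {γ | x.1 γ ≠ 2} with he | hne
  · have h0 : nrm x.1 ≤ 0 := csInf_le' (fun γ _ => by
      by_contra hc
      exact (eq_empty_iff_forall_notMem.1 he γ) hc)
    exact lt_of_le_of_lt h0 hlim.bot_lt
  · set m := sSup {γ | x.1 γ ≠ 2} with hm_def
    have hmem : m ∈ {γ | x.1 γ ≠ 2} := hne.csSup_mem x.2.2
    have hm : m < lam.ord := lt_of_not_ge fun h => hmem (x.2.1 m h)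
    have hb : nrm x.1 ≤ m + 1 := csInf_le' (fun γ hγ => by
      by_contra hc
      have hle : γ ≤ m := le_csSup x.2.2.bddAbove hc
      rw [Ordinal.add_one_eq_succ] at hγ
      exact absurd hγ (not_le.2 (lt_of_le_of_lt hle (Order.lt_succ m))))
    have : m + 1 < lam.ord := by
      rw [Ordinal.add_one_eq_succ]; exact hlim.succ_lt hm
    exact lt_of_le_of_lt hb this

lemma fin3_cases (a : Fin 3) : a = 0 ∨ a = 1 ∨ a = 2 := by revert a; decide

lemma mem_Vnbhd_self {lam : Cardinal.{u}} (x : ↥(Xset lam)) {α : Ordinal.{u}}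
    (h : nrm x.1 ≤ α) : x ∈ Vnbhd lam x α := by
  rcases fin3_cases (x.1 0) with h0 | h0 | h0
  · have h2 : x.1 0 ≠ 2 := by rw [h0]; decide
    have h1 : x.1 0 ≠ 1 := by rw [h0]; decide
    rw [Vnbhd, if_neg h2, if_neg h1]
    exact ⟨fun γ _ _ => rfl, Or.inl h0⟩
  · have h2 : x.1 0 ≠ 2 := by rw [h0]; decide
    rw [Vnbhd, if_neg h2, if_pos h0]
    refine ⟨fun γ _ _ => rfl, fun γ hγ _ => ?_, Or.inl h0⟩
    rw [nrm_spec x (le_trans h hγ)]; decide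
  · rw [Vnbhd, if_pos h0]; exact rfl

lemma Vnbhd_mono {lam : Cardinal.{u}} (x : ↥(Xset lam)) {α β : Ordinal.{u}}
    (hα : nrm x.1 ≤ α) (hαβ : α ≤ β) : Vnbhd lam x β ⊆ Vnbhd lam x α := by
  rcases fin3_cases (x.1 0) with h0 | h0 | h0
  · have h2 : x.1 0 ≠ 2 := by rw [h0]; decide
    have h1 : x.1 0 ≠ 1 := by rw [h0]; decide
    rw [Vnbhd, Vnbhd, if_neg h2, if_neg h1, if_neg h2, if_neg h1]
    rintro y ⟨hr, hy⟩
    refine ⟨fun γ h1γ h2γ => hr γ h1γ (lt_of_lt_of_le h2γ hαβ), ?_⟩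
    rcases hy with hy | ⟨hy2, hylt, hyp⟩
    · exact Or.inl hy
    · exact Or.inr ⟨hy2, lt_of_le_of_lt hαβ hylt, hyp⟩
  · have h2 : x.1 0 ≠ 2 := by rw [h0]; decide
    rw [Vnbhd, Vnbhd, if_neg h2, if_pos h0, if_neg h2, if_pos h0]
    rintro y ⟨hr, hns, hy⟩
    have hα1 : 1 ≤ α := by
      by_contra hc
      have : α = 0 := Ordinal.lt_one_iff_zero.1 (not_le.1 hc)
      have : x.1 0 = 2 := nrm_spec x (by rw [← this]; exact hα)
      exact h2 this
    refine ⟨fun γ h1γ h2γ => hr γ h1γ (lt_of_lt_of_le h2γ hαβ), ?_, ?_⟩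
    · intro γ hγ hγlt
      by_cases hγβ : β ≤ γ
      · exact hns γ hγβ hγlt
      · have h1γ : 1 ≤ γ := le_trans hα1 hγ
        rw [hr γ h1γ (not_le.1 hγβ)]
        rw [nrm_spec x (le_trans hα hγ)]
        decide
    · rcases hy with hy | ⟨hy2, hylt⟩
      · exact Or.inl hy
      · exact Or.inr ⟨hy2, lt_of_le_of_lt hαβ hylt⟩
  · rw [Vnbhd, Vnbhd, if_pos h0, if_pos h0]

noncomputable def tau (lam : Cardinal.{u}) (hlam : ℵ₀ ≤ lam) :
    TopologicalSpace ↥(Xset lam) where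
  IsOpen U := U ∈ tauSet lam
  isOpen_univ := fun x _ =>
    ⟨nrm x.1, le_rfl, nrm_lt hlam x, subset_univ _⟩
  isOpen_inter := by
    intro U V hU hV x hx
    obtain ⟨α, hα1, hα2, hα3⟩ := hU x hx.1
    obtain ⟨β, hβ1, hβ2, hβ3⟩ := hV x hx.2
    refine ⟨max α β, le_trans hα1 (le_max_left _ _), max_lt hα2 hβ2, fun y hy => ?_⟩
    exact ⟨hα3 (Vnbhd_mono x hα1 (le_max_left _ _) hy),
           hβ3 (Vnbhd_mono x hβ1 (le_max_right _ _) hy)⟩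
  isOpen_sUnion := by
    intro S hS x hx
    obtain ⟨U, hU, hxU⟩ := hx
    obtain ⟨α, hα1, hα2, hα3⟩ := hS U hU x hxU
    exact ⟨α, hα1, hα2, fun y hy => ⟨U, hU, hα3 hy⟩⟩


/-- The semilattice operation of `X`: pointwise minimum. -/
noncomputable def pmin (lam : Cardinal.{u}) (x y : ↥(Xset lam)) : ↥(Xset lam) :=
  ⟨fun γ => min (x.1 γ) (y.1 γ), by
    constructor
    · intro γ hγ
      show min (x.1 γ) (y.1 γ) = 2
      rw [x.2.1 γ hγ, y.2.1 γ hγ, min_self]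
    · refine (x.2.2.union y.2.2).subset fun γ hγ => ?_
      have hγ' : min (x.1 γ) (y.1 γ) ≠ 2 := hγ
      simp only [mem_union, mem_setOf_eq]
      by_contra hc
      push_neg at hc
      rw [hc.1, hc.2, min_self] at hγ'
      exact hγ' rfl⟩

/-- `B` is a base of the topology `t`: it consists of open sets, and every open set is a
union of members of `B`. -/
def IsBase {X : Type v} (t : TopologicalSpace X) (B : Set (Set X)) : Prop :=
  (∀ U ∈ B, IsOpen[t] U) ∧ ∀ U, IsOpen[t] U → ∃ S ⊆ B, U = ⋃₀ S

/-- The family `ℬ = {V_α(x) : x ∈ X, α ∈ [‖x‖, λ)}`. -/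
def Vfamily (lam : Cardinal.{u}) : Set (Set ↥(Xset lam)) :=
  {W | ∃ (x : ↥(Xset lam)) (α : Ordinal.{u}), nrm x.1 ≤ α ∧ α < lam.ord ∧ W = Vnbhd lam x α}

/-- The weight of a topological space: the smallest cardinality of a base of its topology. -/
noncomputable def weight {X : Type v} (t : TopologicalSpace X) : Cardinal.{v} :=
  sInf {c : Cardinal.{v} | ∃ B : Set (Set X), IsBase t B ∧ c = Cardinal.mk ↥B}

/-- The function `𝟎_β`, with `𝟎_β β = 0` and `𝟎_β γ = 2` for `γ ≠ β`. -/
noncomputable def zeroF (β : Ordinal.{u}) : Ordinal.{u} → Fin 3 :=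
  fun γ => if γ = β then 0 else 2

/-- The function `𝟏_β`, with `𝟏_β β = 1` and `𝟏_β γ = 2` for `γ ≠ β`. -/
noncomputable def oneF (β : Ordinal.{u}) : Ordinal.{u} → Fin 3 :=
  fun γ => if γ = β then 1 else 2

lemma zeroF_mem (lam : Cardinal.{u}) {β : Ordinal.{u}} (h : β < lam.ord) :
    zeroF β ∈ Xset lam := by
  constructor
  · intro γ hγ
    have hne : γ ≠ β := fun e => absurd h (not_lt.2 (e ▸ hγ))
    simp [zeroF, hne]
  · refine (finite_singleton β).subset fun γ hγ => ?_
    simp only [mem_setOf_eq, zeroF] at hγ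
    by_contra hc
    simp only [mem_singleton_iff] at hc
    rw [if_neg hc] at hγ
    exact hγ rfl

lemma oneF_mem (lam : Cardinal.{u}) {β : Ordinal.{u}} (h : β < lam.ord) :
    oneF β ∈ Xset lam := by
  constructor
  · intro γ hγ
    have hne : γ ≠ β := fun e => absurd h (not_lt.2 (e ▸ hγ))
    simp [oneF, hne]
  · refine (finite_singleton β).subset fun γ hγ => ?_
    simp only [mem_setOf_eq, oneF] at hγ
    by_contra hc
    simp only [mem_singleton_iff] at hc
    rw [if_neg hc] at hγ
    exact hγ rfl

/-- `𝟎_β` as an element of `X` (for `β < λ`). -/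
noncomputable def zeroE (lam : Cardinal.{u}) {β : Ordinal.{u}} (h : β < lam.ord) :
    ↥(Xset lam) := ⟨zeroF β, zeroF_mem lam h⟩

/-- `𝟏_β` as an element of `X` (for `β < λ`). -/
noncomputable def oneE (lam : Cardinal.{u}) {β : Ordinal.{u}} (h : β < lam.ord) :
    ↥(Xset lam) := ⟨oneF β, oneF_mem lam h⟩

/-! Every basic set `V_α(x)` is clopen. It is open because it contains `V_β(y)` for each of its
points `y` and every large `β`. Its complement is open because a basic set `V_β(z)` with
`β ≥ max α ‖z‖` meets `V_α(x)` only if `z ∈ V_α(x)`; the key case is that `V_α(x)` and `V_β(z)`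
never meet when `x(0) = 0` and `z(0) = 1`: a common point `w` would have `w(0) = 2` and its last
support point would carry the value `1`, which `V_β(z)` forbids beyond `β`. So `τ` is regular,
and it is `T₀` because `y ∈ V_α(x)` forces `y = x` once `α ≥ max ‖x‖ ‖y‖`. For `λ = ω` the
space is countable and each point has the countable neighbourhood base `(V_n(x))_{n ∈ ℕ}`,
hence `τ` is second countable and Urysohn's metrization theorem applies. -/

section

variable {lam : Cardinal.{u}}

lemma lt_nrm_of_ne_two (x : ↥(Xset lam)) {γ : Ordinal.{u}} (h : x.1 γ ≠ 2) : γ < nrm x.1 :=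
  lt_of_not_ge fun hγ => h (nrm_spec x hγ)

lemma one_le_of_nrm_le {x : ↥(Xset lam)} {α : Ordinal.{u}} (hx : x.1 0 ≠ 2)
    (hα : nrm x.1 ≤ α) : 1 ≤ α :=
  Order.one_le_iff_pos.2 ((lt_nrm_of_ne_two x hx).trans_le hα)

lemma eq_zero_or_one_of_ne_two {a : Fin 3} (h : a ≠ 2) : a = 0 ∨ a = 1 := by
  revert a
  decide

lemma Vnbhd_of_two {x : ↥(Xset lam)} (h : x.1 0 = 2) (α : Ordinal.{u}) :
    Vnbhd lam x α = {x} :=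
  if_pos h

lemma mem_Vnbhd_of_one {x y : ↥(Xset lam)} {α : Ordinal.{u}} (h : x.1 0 = 1) :
    y ∈ Vnbhd lam x α ↔
      (∀ γ, 1 ≤ γ → γ < α → y.1 γ = x.1 γ) ∧ (∀ γ, α ≤ γ → γ < lam.ord → y.1 γ ≠ 1) ∧
        (y.1 0 = 1 ∨ (y.1 0 = 2 ∧ α < nrm y.1)) := by
  rw [Vnbhd, if_neg (by rw [h]; decide), if_pos h]
  rfl

lemma mem_Vnbhd_of_zero {x y : ↥(Xset lam)} {α : Ordinal.{u}} (h : x.1 0 = 0) :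
    y ∈ Vnbhd lam x α ↔
      (∀ γ, 1 ≤ γ → γ < α → y.1 γ = x.1 γ) ∧
        (y.1 0 = 0 ∨ (y.1 0 = 2 ∧ α < nrm y.1 ∧ y.1 (Ordinal.pred (nrm y.1)) = 1)) := by
  rw [Vnbhd, if_neg (by rw [h]; decide), if_neg (by rw [h]; decide)]
  rfl

lemma apply_eq_of_mem_Vnbhd {x y : ↥(Xset lam)} {α γ : Ordinal.{u}} (hx : x.1 0 ≠ 2)
    (hy : y ∈ Vnbhd lam x α) (h1γ : 1 ≤ γ) (hγα : γ < α) : y.1 γ = x.1 γ := by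
  rcases eq_zero_or_one_of_ne_two hx with h | h
  · exact ((mem_Vnbhd_of_zero h).1 hy).1 γ h1γ hγα
  · exact ((mem_Vnbhd_of_one h).1 hy).1 γ h1γ hγα

lemma apply_zero_eq_or_of_mem_Vnbhd {x y : ↥(Xset lam)} {α : Ordinal.{u}} (hx : x.1 0 ≠ 2)
    (hy : y ∈ Vnbhd lam x α) : y.1 0 = x.1 0 ∨ (y.1 0 = 2 ∧ α < nrm y.1) := by
  rcases eq_zero_or_one_of_ne_two hx with h | h
  · rw [h]
    exact ((mem_Vnbhd_of_zero h).1 hy).2.imp_right fun ⟨h2, hlt, _⟩ => ⟨h2, hlt⟩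
  · rw [h]
    exact ((mem_Vnbhd_of_one h).1 hy).2.2

lemma apply_zero_eq_of_mem_Vnbhd {x y : ↥(Xset lam)} {α : Ordinal.{u}} (hx : x.1 0 ≠ 2)
    (hy : y ∈ Vnbhd lam x α) (hyα : nrm y.1 ≤ α) : y.1 0 = x.1 0 :=
  (apply_zero_eq_or_of_mem_Vnbhd hx hy).resolve_right fun h => h.2.not_ge hyα

lemma Vnbhd_subset_of_mem {x y : ↥(Xset lam)} {α β : Ordinal.{u}} (hα : nrm x.1 ≤ α)
    (hy : y ∈ Vnbhd lam x α) (hαβ : α ≤ β) : Vnbhd lam y β ⊆ Vnbhd lam x α := by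
  by_cases hy2 : y.1 0 = 2
  · rwa [Vnbhd_of_two hy2, singleton_subset_iff]
  have hx2 : x.1 0 ≠ 2 := by
    intro hx2
    rw [Vnbhd_of_two hx2, mem_singleton_iff] at hy
    exact hy2 (hy ▸ hx2)
  have hyx : y.1 0 = x.1 0 := (apply_zero_eq_or_of_mem_Vnbhd hx2 hy).resolve_right (hy2 ·.1)
  have hagree : ∀ z ∈ Vnbhd lam y β, ∀ γ, 1 ≤ γ → γ < α → z.1 γ = x.1 γ := fun z hz γ h1 hγ =>
    (apply_eq_of_mem_Vnbhd hy2 hz h1 (hγ.trans_le hαβ)).trans (apply_eq_of_mem_Vnbhd hx2 hy h1 hγ)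
  intro z hz
  rcases eq_zero_or_one_of_ne_two hx2 with h0 | h0
  · refine (mem_Vnbhd_of_zero h0).2 ⟨hagree z hz, ?_⟩
    exact ((mem_Vnbhd_of_zero (hyx.trans h0)).1 hz).2.imp_right
      fun ⟨h2, hlt, hlast⟩ => ⟨h2, hαβ.trans_lt hlt, hlast⟩
  · obtain ⟨-, hz1, hz0⟩ := (mem_Vnbhd_of_one (hyx.trans h0)).1 hz
    refine (mem_Vnbhd_of_one h0).2 ⟨hagree z hz, fun γ hγ hγlam => ?_,
      hz0.imp_right fun ⟨h2, hlt⟩ => ⟨h2, hαβ.trans_lt hlt⟩⟩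
    rcases lt_or_ge γ β with hγβ | hβγ
    · rw [apply_eq_of_mem_Vnbhd hy2 hz ((one_le_of_nrm_le hx2 hα).trans hγ) hγβ]
      exact ((mem_Vnbhd_of_one h0).1 hy).2.1 γ hγ hγlam
    · exact hz1 γ hβγ hγlam

lemma isOpen_Vnbhd (hlam : ℵ₀ ≤ lam) {x : ↥(Xset lam)} {α : Ordinal.{u}} (hα : nrm x.1 ≤ α)
    (hαlam : α < lam.ord) : IsOpen[tau lam hlam] (Vnbhd lam x α) := fun y hy =>
  ⟨max α (nrm y.1), le_max_right _ _, max_lt hαlam (nrm_lt hlam y),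
    Vnbhd_subset_of_mem hα hy (le_max_left _ _)⟩

lemma nhds_hasBasis_Vnbhd (hlam : ℵ₀ ≤ lam) (x : ↥(Xset lam)) :
    (@nhds _ (tau lam hlam) x).HasBasis (fun α => nrm x.1 ≤ α ∧ α < lam.ord) (Vnbhd lam x) := by
  let _ := tau lam hlam
  refine ⟨fun s => ⟨fun hs => ?_, fun ⟨α, ⟨hα, hαlam⟩, hs⟩ => ?_⟩⟩
  · obtain ⟨U, hUs, hU, hxU⟩ := mem_nhds_iff.1 hs
    obtain ⟨α, hα, hαlam, hVU⟩ := hU x hxU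
    exact ⟨α, ⟨hα, hαlam⟩, hVU.trans hUs⟩
  · exact Filter.mem_of_superset ((isOpen_Vnbhd hlam hα hαlam).mem_nhds (mem_Vnbhd_self x hα)) hs

lemma disjoint_Vnbhd_of_zero_of_one (hlam : ℵ₀ ≤ lam) {x z : ↥(Xset lam)} (hx : x.1 0 = 0)
    (hz : z.1 0 = 1) (α β : Ordinal.{u}) : Disjoint (Vnbhd lam x α) (Vnbhd lam z β) := by
  refine Set.disjoint_left.2 fun w hwx hwz => ?_
  obtain ⟨-, hw0⟩ := (mem_Vnbhd_of_zero hx).1 hwx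
  obtain ⟨-, hw1, hw0'⟩ := (mem_Vnbhd_of_one hz).1 hwz
  rcases hw0 with h0 | ⟨h2, -, hlast⟩
  · rcases hw0' with h | ⟨h, -⟩ <;> exact absurd (h0.symm.trans h) (by decide)
  rcases hw0' with h1 | ⟨-, hβ⟩
  · exact absurd (h2.symm.trans h1) (by decide)
  have hpred : β ≤ Ordinal.pred (nrm w.1) :=
    Order.lt_succ_iff.1 (hβ.trans_le (Ordinal.self_le_succ_pred _))
  exact hw1 _ hpred ((Ordinal.pred_le_self _).trans_lt (nrm_lt hlam w)) hlast

lemma mem_Vnbhd_of_mem_of_mem (hlam : ℵ₀ ≤ lam) {x z w : ↥(Xset lam)} {α β : Ordinal.{u}}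
    (hα : nrm x.1 ≤ α) (hαβ : α ≤ β) (hzβ : nrm z.1 ≤ β) (hwz : w ∈ Vnbhd lam z β)
    (hwx : w ∈ Vnbhd lam x α) : z ∈ Vnbhd lam x α := by
  by_cases hz2 : z.1 0 = 2
  · rw [Vnbhd_of_two hz2, mem_singleton_iff] at hwz
    rwa [← hwz]
  by_cases hx2 : x.1 0 = 2
  · rw [Vnbhd_of_two hx2, mem_singleton_iff] at hwx
    subst hwx
    exact absurd ((apply_zero_eq_of_mem_Vnbhd hz2 hwz (hα.trans hαβ)).symm.trans hx2) hz2
  have hagree : ∀ γ, 1 ≤ γ → γ < α → z.1 γ = x.1 γ := fun γ h1 hγ =>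
    (apply_eq_of_mem_Vnbhd hz2 hwz h1 (hγ.trans_le hαβ)).symm.trans
      (apply_eq_of_mem_Vnbhd hx2 hwx h1 hγ)
  rcases eq_zero_or_one_of_ne_two hx2 with hx0 | hx0 <;>
    rcases eq_zero_or_one_of_ne_two hz2 with hz0 | hz0
  · exact (mem_Vnbhd_of_zero hx0).2 ⟨hagree, Or.inl hz0⟩
  · exact (Set.disjoint_left.1 (disjoint_Vnbhd_of_zero_of_one hlam hx0 hz0 α β) hwx hwz).elim
  · exact (Set.disjoint_left.1 (disjoint_Vnbhd_of_zero_of_one hlam hz0 hx0 β α) hwz hwx).elim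
  · refine (mem_Vnbhd_of_one hx0).2 ⟨hagree, fun γ hγ hγlam => ?_, Or.inl hz0⟩
    rcases lt_or_ge γ β with hγβ | hβγ
    · rw [← apply_eq_of_mem_Vnbhd hz2 hwz ((one_le_of_nrm_le hx2 hα).trans hγ) hγβ]
      exact ((mem_Vnbhd_of_one hx0).1 hwx).2.1 γ hγ hγlam
    · rw [nrm_spec z (hzβ.trans hβγ)]
      decide

lemma isClosed_Vnbhd (hlam : ℵ₀ ≤ lam) {x : ↥(Xset lam)} {α : Ordinal.{u}} (hα : nrm x.1 ≤ α)
    (hαlam : α < lam.ord) : IsClosed[tau lam hlam] (Vnbhd lam x α) := by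
  let _ := tau lam hlam
  rw [← isOpen_compl_iff]
  exact fun z hz => ⟨max α (nrm z.1), le_max_right _ _, max_lt hαlam (nrm_lt hlam z),
    fun w hwz hwx => hz (mem_Vnbhd_of_mem_of_mem hlam hα (le_max_left _ _) (le_max_right _ _)
      hwz hwx)⟩

lemma eq_of_mem_Vnbhd {x y : ↥(Xset lam)} {α : Ordinal.{u}} (hxα : nrm x.1 ≤ α)
    (hyα : nrm y.1 ≤ α) (hy : y ∈ Vnbhd lam x α) : y = x := by
  by_cases hx2 : x.1 0 = 2
  · rwa [Vnbhd_of_two hx2, mem_singleton_iff] at hy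
  refine Subtype.ext (funext fun γ => ?_)
  rcases lt_or_ge γ α with hγα | hαγ
  · rcases eq_or_ne γ 0 with rfl | hγ0
    · exact apply_zero_eq_of_mem_Vnbhd hx2 hy hyα
    · exact apply_eq_of_mem_Vnbhd hx2 hy (Order.one_le_iff_ne_zero.2 hγ0) hγα
  · rw [nrm_spec y (hyα.trans hαγ), nrm_spec x (hxα.trans hαγ)]

lemma t0Space_tau (hlam : ℵ₀ ≤ lam) : @T0Space _ (tau lam hlam) := by
  let _ := tau lam hlam
  refine ⟨fun x y hxy => ?_⟩
  have hxα : nrm x.1 ≤ max (nrm x.1) (nrm y.1) := le_max_left _ _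
  have hV := isOpen_Vnbhd hlam hxα (max_lt (nrm_lt hlam x) (nrm_lt hlam y))
  exact (eq_of_mem_Vnbhd hxα (le_max_right _ _)
    ((hxy.mem_open_iff hV).1 (mem_Vnbhd_self x hxα))).symm

lemma regularSpace_tau (hlam : ℵ₀ ≤ lam) : @RegularSpace _ (tau lam hlam) :=
  @RegularSpace.of_hasBasis _ (tau lam hlam) _ _ _ (nhds_hasBasis_Vnbhd hlam)
    fun _ _ hα => isClosed_Vnbhd hlam hα.1 hα.2

lemma exists_nat_eq_of_lt_ord (h : lam ≤ ℵ₀) {γ : Ordinal.{u}} (hγ : γ < lam.ord) :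
    ∃ n : ℕ, γ = n :=
  Ordinal.lt_omega0.1 (hγ.trans_le (by simpa using Cardinal.ord_le_ord.2 h))

lemma countable_Xset (h : lam ≤ ℵ₀) : Countable ↥(Xset lam) := by
  -- adding `1` in `Fin 3` moves the default value `2` to `0`
  let f : ↥(Xset lam) → ℕ →₀ Fin 3 := fun x =>
    Finsupp.ofSupportFinite (fun n : ℕ => x.1 n + 1)
      ((x.2.2.preimage Nat.cast_injective.injOn).subset fun n hn h2 =>
        hn (show x.1 n + 1 = 0 by rw [h2]; decide))
  refine Function.Injective.countable (f := f) fun x y hxy => Subtype.ext (funext fun γ => ?_)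
  by_cases hγ : γ < lam.ord
  · obtain ⟨n, rfl⟩ := exists_nat_eq_of_lt_ord h hγ
    exact add_right_cancel (DFunLike.congr_fun hxy n)
  · rw [x.2.1 γ (not_lt.1 hγ), y.2.1 γ (not_lt.1 hγ)]

lemma firstCountableTopology_tau (hlam : ℵ₀ ≤ lam) (h : lam ≤ ℵ₀) :
    @FirstCountableTopology _ (tau lam hlam) := by
  let _ := tau lam hlam
  refine ⟨fun x => Filter.HasCountableBasis.isCountablyGenerated ⟨nhds_hasBasis_Vnbhd hlam x, ?_⟩⟩
  refine (countable_range (Nat.cast : ℕ → Ordinal.{u})).mono fun α hα => ?_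
  obtain ⟨n, rfl⟩ := exists_nat_eq_of_lt_ord h hα.2
  exact mem_range_self n

end

/-- If `λ = ω` then the countable topological space `(X, τ)` is
metrizable. -/
theorem metrizable_tau_of_aleph0 (lam : Cardinal.{u}) (hlam : ℵ₀ ≤ lam)
    (heq : lam = Cardinal.aleph0) :
    Countable ↥(Xset lam) ∧
    @TopologicalSpace.MetrizableSpace ↥(Xset lam) (tau lam hlam) := by
  let _ := tau lam hlam
  have := countable_Xset heq.le
  have := firstCountableTopology_tau hlam heq.le
  have := regularSpace_tau hlam
  have := t0Space_tau hlam
  exact ⟨inferInstance, inferInstance⟩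

end LawsonExample
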